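/- arXiv:2204.09757 — 5 statements merged into one kernel-verified Lean document; each statement's English description precedes it below -/
import Mathlib

section
/- Let p ≥ 2 be an integer. Then the infinite product ∏_{i=1}^∞ (1 − p^{−(2i−1)}) is multipliable (converges), and 1 − ∏_{i=1}^∞ (1 − p^{−(2i−1)}) > p^{−1} + p^{−3} − p^{−4}. (This is the unconditional numerical inequality asserted in Conjecture 4.2 of the paper.) -/
/-- For an integer `p ≥ 2`, the infinite product `∏_{i ≥ 1} (1 - p^{-(2i-1)})`
(indexed here by `i : ℕ`, with term `1 - p^{-(2i+1)}`) converges, and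
`1 - ∏_{i ≥ 1} (1 - p^{-(2i-1)}) > p⁻¹ + p⁻³ - p⁻⁴`. -/
theorem one_sub_tprod_gt (p : ℕ) (hp : 2 ≤ p) :
    Multipliable (fun i : ℕ => 1 - ((p : ℝ) ^ (2 * i + 1))⁻¹) ∧
      1 - ∏' i : ℕ, (1 - ((p : ℝ) ^ (2 * i + 1))⁻¹) >
        (p : ℝ)⁻¹ + ((p : ℝ) ^ 3)⁻¹ - ((p : ℝ) ^ 4)⁻¹ := by
  have hp2 : (2 : ℝ) ≤ (p : ℝ) := by exact_mod_cast hp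
  have hp0 : (0 : ℝ) < (p : ℝ) := by linarith
  set f : ℕ → ℝ := fun i => 1 - ((p : ℝ) ^ (2 * i + 1))⁻¹ with hf
  -- basic bounds on the inverse term
  have hxpos : ∀ i, 0 < ((p : ℝ) ^ (2 * i + 1))⁻¹ := fun i =>
    inv_pos.mpr (pow_pos hp0 _)
  have hxle : ∀ i, ((p : ℝ) ^ (2 * i + 1))⁻¹ ≤ (1 / 2 : ℝ) ^ (i + 1) := by
    intro i
    rw [one_div, inv_pow]
    apply inv_anti₀ (pow_pos two_pos _)
    calc (2 : ℝ) ^ (i + 1) ≤ (2 : ℝ) ^ (2 * i + 1) := by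
          apply pow_le_pow_right₀ one_le_two; omega
      _ ≤ (p : ℝ) ^ (2 * i + 1) := by
          apply pow_le_pow_left₀ (by norm_num) hp2
  have hxhalf : ∀ i, ((p : ℝ) ^ (2 * i + 1))⁻¹ ≤ 1 / 2 := by
    intro i
    calc ((p : ℝ) ^ (2 * i + 1))⁻¹ ≤ (1 / 2 : ℝ) ^ (i + 1) := hxle i
      _ ≤ (1 / 2 : ℝ) ^ 1 := by
          apply pow_le_pow_of_le_one (by norm_num) (by norm_num); omega
      _ = 1 / 2 := by norm_num
  have hfpos : ∀ i, (0 : ℝ) < f i := by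
    intro i; have := hxhalf i; simp only [hf]; linarith
  have hflt1 : ∀ i, f i < 1 := by
    intro i; have := hxpos i; simp only [hf]; linarith
  -- Summability of the logs
  have hsum : Summable fun i => Real.log (f i) := by
    rw [← summable_neg_iff]
    have hgeo : Summable fun i : ℕ => (1 / 2 : ℝ) ^ i :=
      summable_geometric_of_lt_one (by norm_num) (by norm_num)
    refine Summable.of_nonneg_of_le ?_ ?_ hgeo
    · intro i
      have : Real.log (f i) ≤ 0 := Real.log_nonpos (hfpos i).le (hflt1 i).le
      simpa using this
    intro i
    have h1 : 1 - (f i)⁻¹ ≤ Real.log (f i) := Real.one_sub_inv_le_log_of_pos (hfpos i)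
    have hfge : (1 / 2 : ℝ) ≤ f i := by
      have := hxhalf i; simp only [hf]; linarith
    have hinv : (f i)⁻¹ ≤ 2 := by
      rw [inv_le_comm₀ (hfpos i) two_pos]; linarith
    have h2 : (f i)⁻¹ - 1 ≤ 2 * ((p : ℝ) ^ (2 * i + 1))⁻¹ := by
      have hmul : f i * (f i)⁻¹ = 1 := mul_inv_cancel₀ (hfpos i).ne'
      have hfi : f i = 1 - ((p : ℝ) ^ (2 * i + 1))⁻¹ := rfl
      nlinarith [hxpos i, (hfpos i)]
    have h3 : 2 * ((p : ℝ) ^ (2 * i + 1))⁻¹ ≤ (1 / 2 : ℝ) ^ i := by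
      have := hxle i
      have : 2 * ((p : ℝ) ^ (2 * i + 1))⁻¹ ≤ 2 * (1 / 2 : ℝ) ^ (i + 1) := by linarith
      calc 2 * ((p : ℝ) ^ (2 * i + 1))⁻¹ ≤ 2 * (1 / 2 : ℝ) ^ (i + 1) := this
        _ = (1 / 2 : ℝ) ^ i := by rw [pow_succ]; ring
    linarith
  have hm : Multipliable f :=
    Real.multipliable_of_summable_log hfpos hsum
  refine ⟨hm, ?_⟩
  -- the partial products are antitone
  have hanti : ∀ m n, m ≤ n → ∏ i ∈ Finset.range n, f i ≤ ∏ i ∈ Finset.range m, f i := by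
    have : Antitone (fun n => ∏ i ∈ Finset.range n, f i) := by
      apply antitone_nat_of_succ_le
      intro n
      rw [Finset.prod_range_succ]
      have hpp : 0 < ∏ i ∈ Finset.range n, f i := Finset.prod_pos fun i _ => hfpos i
      nlinarith [hflt1 n]
    exact fun m n h => this h
  have hle3 : (∏' i, f i) ≤ ∏ i ∈ Finset.range 3, f i := by
    apply le_of_tendsto hm.hasProd.tendsto_prod_nat
    filter_upwards [Filter.eventually_ge_atTop 3] with n hn
    exact hanti 3 n hn
  have hppos : ∀ n : ℕ, (0 : ℝ) < (p : ℝ) ^ n := fun n => pow_pos hp0 n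
  have h3eq : ∏ i ∈ Finset.range 3, f i =
      (1 - ((p : ℝ) ^ 1)⁻¹) * (1 - ((p : ℝ) ^ 3)⁻¹) * (1 - ((p : ℝ) ^ 5)⁻¹) := by
    simp [hf, Finset.prod_range_succ]
  have hlt : ∏ i ∈ Finset.range 3, f i < (1 - ((p : ℝ) ^ 1)⁻¹) * (1 - ((p : ℝ) ^ 3)⁻¹) := by
    rw [h3eq]
    have h1 : (0 : ℝ) < 1 - ((p : ℝ) ^ 1)⁻¹ := by
      have : ((p : ℝ) ^ 1)⁻¹ ≤ 1 / 2 := by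
        simpa using hxhalf 0
      linarith
    have h2 : (0 : ℝ) < 1 - ((p : ℝ) ^ 3)⁻¹ := by
      have : ((p : ℝ) ^ 3)⁻¹ ≤ 1 / 2 := by
        have := hxhalf 1; norm_num at this ⊢; convert this using 2
      linarith
    have h5 : 1 - ((p : ℝ) ^ 5)⁻¹ < 1 := by
      have : (0 : ℝ) < ((p : ℝ) ^ 5)⁻¹ := inv_pos.mpr (hppos 5)
      linarith
    exact mul_lt_of_lt_one_right (by positivity) h5
  have hprod_eq : (1 - ((p : ℝ) ^ 1)⁻¹) * (1 - ((p : ℝ) ^ 3)⁻¹) =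
      1 - ((p : ℝ)⁻¹ + ((p : ℝ) ^ 3)⁻¹ - ((p : ℝ) ^ 4)⁻¹) := by
    have hne : (p : ℝ) ≠ 0 := hp0.ne'
    field_simp
    ring
  have : (∏' i, f i) < 1 - ((p : ℝ)⁻¹ + ((p : ℝ) ^ 3)⁻¹ - ((p : ℝ) ^ 4)⁻¹) := by
    rw [← hprod_eq]; exact lt_of_le_of_lt hle3 hlt
  simp only [hf] at this
  linarith
end

section
/- The family (1 − (1 − ℓ^{−10})^{−1}(1 − ℓ^{−1})(ℓ^{−3} + ℓ^{−4} + ℓ^{−7})), indexed by primes ℓ ≠ 3, is multipliable, and ∏_{ℓ prime, ℓ≠3} (1 − (1 − ℓ^{−10})^{−1}(1 − ℓ^{−1})(ℓ^{−3} + ℓ^{−4} + ℓ^{−7})) > 1 − (ζ(3) − 1) − (ζ(4) − 1) − (ζ(7) − 1). (This is the analytic chain of inequalities proved in case (2) of Theorem 3.8.) -/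
open Real


/-- The Riemann zeta function at a natural number argument `s`, defined as the
real series `∑_{n ≥ 1} n^{-s}`. -/
noncomputable def zetaNat (s : ℕ) : ℝ := ∑' n : ℕ, 1 / ((n : ℝ) + 1) ^ s



/-- Weierstrass-type inequality. -/
lemma my_prod_one_sub_ge {ι : Type*} (f : ι → ℝ) (h0 : ∀ i, 0 ≤ f i) (h1 : ∀ i, f i ≤ 1)
    (s : Finset ι) : 1 - ∑ i ∈ s, f i ≤ ∏ i ∈ s, (1 - f i) := by
  classical
  induction s using Finset.cons_induction with
  | empty => simp
  | cons a s ha ih =>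
    rw [Finset.prod_cons, Finset.sum_cons]
    have hS : 0 ≤ ∑ i ∈ s, f i := Finset.sum_nonneg fun i _ => h0 i
    calc 1 - (f a + ∑ i ∈ s, f i) ≤ (1 - f a) * (1 - ∑ i ∈ s, f i) := by nlinarith [h0 a, h1 a]
      _ ≤ (1 - f a) * ∏ i ∈ s, (1 - f i) :=
          mul_le_mul_of_nonneg_left ih (by linarith [h1 a])

lemma my_summable_shift (s : ℕ) (hs : 1 < s) :
    Summable (fun n : ℕ => (((n : ℝ) + 1) ^ s)⁻¹) := by
  have h := Real.summable_nat_pow_inv.mpr hs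
  have h1 : Summable (fun n : ℕ => (((n + 1 : ℕ) : ℝ) ^ s)⁻¹) :=
    (summable_nat_add_iff (f := fun n : ℕ => ((n : ℝ) ^ s)⁻¹) 1).mpr h
  exact h1.congr (fun n => by push_cast; ring_nf)

lemma my_summable_shift2 (s : ℕ) (hs : 1 < s) :
    Summable (fun n : ℕ => (((n : ℝ) + 2) ^ s)⁻¹) := by
  have h := Real.summable_nat_pow_inv.mpr hs
  have h1 : Summable (fun n : ℕ => (((n + 2 : ℕ) : ℝ) ^ s)⁻¹) :=
    (summable_nat_add_iff (f := fun n : ℕ => ((n : ℝ) ^ s)⁻¹) 2).mpr h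
  exact h1.congr (fun n => by push_cast; ring_nf)

lemma my_zeta_sub_one (s : ℕ) (hs : 1 < s) :
    zetaNat s - 1 = ∑' n : ℕ, (((n : ℝ) + 2) ^ s)⁻¹ := by
  have h := my_summable_shift s hs
  have h2 : zetaNat s = ∑' n : ℕ, (((n : ℝ) + 1) ^ s)⁻¹ := by
    unfold zetaNat; congr 1; ext n; rw [one_div]
  rw [h2, Summable.tsum_eq_zero_add h]
  push_cast
  rw [show ((0:ℝ) + 1) ^ s = 1 by norm_num]
  have : ∀ n : ℕ, (((n:ℝ) + 1 + 1) ^ s)⁻¹ = (((n:ℝ) + 2) ^ s)⁻¹ := by intro n; ring_nf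
  rw [tsum_congr this]
  ring

lemma my_summable_subtype (s : ℕ) (hs : 1 < s) :
    Summable (fun ℓ : {ℓ : ℕ // ℓ.Prime ∧ ℓ ≠ 3} => (((ℓ.1 : ℝ)) ^ s)⁻¹) :=
  ((Real.summable_nat_pow_inv.mpr hs).subtype {ℓ : ℕ | ℓ.Prime ∧ ℓ ≠ 3}).congr (fun _ => rfl)

/-- Tail sum over primes ≠ 3 bounded by ζ(s) − 1. -/
lemma my_tail_le (s : ℕ) (hs : 1 < s) :
    ∑' ℓ : {ℓ : ℕ // ℓ.Prime ∧ ℓ ≠ 3}, (((ℓ.1 : ℝ)) ^ s)⁻¹ ≤ zetaNat s - 1 := by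
  rw [my_zeta_sub_one s hs]
  refine Summable.tsum_le_tsum_of_inj (fun ℓ => ℓ.1 - 2) ?_ (fun c _ => by positivity) ?_
    (my_summable_subtype s hs) (my_summable_shift2 s hs)
  · intro a b hab
    have hab' : a.1 - 2 = b.1 - 2 := hab
    have ha := a.2.1.two_le; have hb := b.2.1.two_le
    have : a.1 = b.1 := by omega
    exact Subtype.ext this
  · intro ℓ
    have h2 := ℓ.2.1.two_le
    have hcast : ((ℓ.1 - 2 : ℕ) : ℝ) + 2 = (ℓ.1 : ℝ) := by
      have : ((ℓ.1 - 2 : ℕ) : ℝ) = (ℓ.1 : ℝ) - 2 := by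
        push_cast [Nat.cast_sub h2]; ring
      rw [this]; ring
    simp only [hcast]
    exact le_refl _

/-- The family `(1 - (1 - ℓ^{-10})⁻¹ (1 - ℓ⁻¹)(ℓ^{-3} + ℓ^{-4} + ℓ^{-7}))`, indexed by
primes `ℓ ≠ 3`, is multipliable, and its product is
`> 1 - (ζ(3) - 1) - (ζ(4) - 1) - (ζ(7) - 1)`. -/
theorem tprod_primes_p_three :
    Multipliable (fun ℓ : {ℓ : ℕ // ℓ.Prime ∧ ℓ ≠ 3} =>
      1 - (1 - ((ℓ.1 : ℝ) ^ 10)⁻¹)⁻¹ * (1 - (ℓ.1 : ℝ)⁻¹) *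
        (((ℓ.1 : ℝ) ^ 3)⁻¹ + ((ℓ.1 : ℝ) ^ 4)⁻¹ + ((ℓ.1 : ℝ) ^ 7)⁻¹)) ∧
      (∏' ℓ : {ℓ : ℕ // ℓ.Prime ∧ ℓ ≠ 3},
        (1 - (1 - ((ℓ.1 : ℝ) ^ 10)⁻¹)⁻¹ * (1 - (ℓ.1 : ℝ)⁻¹) *
          (((ℓ.1 : ℝ) ^ 3)⁻¹ + ((ℓ.1 : ℝ) ^ 4)⁻¹ + ((ℓ.1 : ℝ) ^ 7)⁻¹))) >
        1 - (zetaNat 3 - 1) - (zetaNat 4 - 1) - (zetaNat 7 - 1) := by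
  set I := {ℓ : ℕ // ℓ.Prime ∧ ℓ ≠ 3}
  set F : I → ℝ := fun ℓ => (1 - ((ℓ.1 : ℝ) ^ 10)⁻¹)⁻¹ * (1 - (ℓ.1 : ℝ)⁻¹) *
        (((ℓ.1 : ℝ) ^ 3)⁻¹ + ((ℓ.1 : ℝ) ^ 4)⁻¹ + ((ℓ.1 : ℝ) ^ 7)⁻¹) with hF
  set G : I → ℝ := fun ℓ => ((ℓ.1 : ℝ) ^ 3)⁻¹ + ((ℓ.1 : ℝ) ^ 4)⁻¹ + ((ℓ.1 : ℝ) ^ 7)⁻¹ with hG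
  have hx : ∀ ℓ : I, (2 : ℝ) ≤ (ℓ.1 : ℝ) := fun ℓ => by exact_mod_cast ℓ.2.1.two_le
  have hG0 : ∀ ℓ : I, 0 < G ℓ := fun ℓ => by have := hx ℓ; positivity
  have hFG : ∀ ℓ : I, F ℓ < G ℓ := by
    intro ℓ
    have h2 := hx ℓ
    set x := (ℓ.1 : ℝ)
    have hx0 : (0:ℝ) < x := by linarith
    have hle10 : (2:ℝ) ^ 10 ≤ x ^ 10 := pow_le_pow_left₀ (by norm_num) h2 10
    have hx10 : (1:ℝ) < x ^ 10 := by nlinarith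
    have hxx10 : x < x ^ 10 := by
      calc x = x ^ 1 := (pow_one x).symm
        _ < x ^ 10 := pow_lt_pow_right₀ (by linarith) (by norm_num)
    have hinv10 : (x ^ 10)⁻¹ < x⁻¹ := by
      exact inv_strictAnti₀ hx0 hxx10
    have hp10 : (0:ℝ) < 1 - (x ^ 10)⁻¹ := by
      have : (x ^ 10)⁻¹ < 1 := by
        rw [inv_lt_one_iff₀]; right; exact hx10
      linarith
    have hc : (1 - (x ^ 10)⁻¹)⁻¹ * (1 - x⁻¹) < 1 := by
      rw [inv_mul_lt_iff₀ hp10, mul_one]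
      linarith
    calc F ℓ = ((1 - (x ^ 10)⁻¹)⁻¹ * (1 - x⁻¹)) * G ℓ := rfl
      _ < 1 * G ℓ := mul_lt_mul_of_pos_right hc (hG0 ℓ)
      _ = G ℓ := one_mul _
  have hF0 : ∀ ℓ : I, 0 ≤ F ℓ := by
    intro ℓ
    have h2 := hx ℓ
    set x := (ℓ.1 : ℝ)
    have hx0 : (0:ℝ) < x := by linarith
    have hle10 : (2:ℝ) ^ 10 ≤ x ^ 10 := pow_le_pow_left₀ (by norm_num) h2 10
    have hp10 : (0:ℝ) ≤ 1 - (x ^ 10)⁻¹ := by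
      have : (x ^ 10)⁻¹ ≤ 1 := by
        rw [inv_le_one_iff₀]; right; nlinarith
      linarith
    have hxi : x⁻¹ ≤ 1 := by rw [inv_le_one_iff₀]; right; linarith
    have h1x : (0:ℝ) ≤ 1 - x⁻¹ := by linarith
    have hG0' := (hG0 ℓ).le
    exact mul_nonneg (mul_nonneg (inv_nonneg.mpr hp10) h1x) hG0'
  have hGhalf : ∀ ℓ : I, G ℓ ≤ 1/2 := by
    intro ℓ
    have h2 := hx ℓ
    set x := (ℓ.1 : ℝ)
    have hx0 : (0:ℝ) < x := by linarith
    have h3 : (x ^ 3)⁻¹ ≤ 1/8 := by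
      rw [inv_le_comm₀ (by positivity) (by norm_num)]
      norm_num; nlinarith [sq_nonneg (x - 2)]
    have h4 : (x ^ 4)⁻¹ ≤ 1/8 := by
      rw [inv_le_comm₀ (by positivity) (by norm_num)]
      norm_num; nlinarith [sq_nonneg (x - 2), sq_nonneg x]
    have h7 : (x ^ 7)⁻¹ ≤ 1/8 := by
      rw [inv_le_comm₀ (by positivity) (by norm_num)]
      norm_num; nlinarith [pow_le_pow_left₀ (by norm_num : (0:ℝ) ≤ 2) h2 7]
    have : G ℓ = (x ^ 3)⁻¹ + (x ^ 4)⁻¹ + (x ^ 7)⁻¹ := rfl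
    rw [this]; linarith
  have hFhalf : ∀ ℓ : I, F ℓ ≤ 1/2 := fun ℓ => (hFG ℓ).le.trans (hGhalf ℓ)
  have hF1 : ∀ ℓ : I, 0 < 1 - F ℓ := fun ℓ => by linarith [hFhalf ℓ]
  have hsG : Summable G :=
    (((my_summable_subtype 3 (by norm_num)).add (my_summable_subtype 4 (by norm_num))).add
      (my_summable_subtype 7 (by norm_num))).congr (fun ℓ => rfl)
  have hsF : Summable F := Summable.of_nonneg_of_le hF0 (fun ℓ => (hFG ℓ).le) hsG
  have hlog : Summable (fun ℓ : I => Real.log (1 - F ℓ)) := by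
    have key : ∀ ℓ : I, -Real.log (1 - F ℓ) ≤ 2 * F ℓ := by
      intro ℓ
      have h1 := hF1 ℓ
      have h2 := hFhalf ℓ
      have h0 := hF0 ℓ
      have hlog1 : Real.log (1 - F ℓ)⁻¹ ≤ (1 - F ℓ)⁻¹ - 1 :=
        Real.log_le_sub_one_of_pos (by positivity)
      have hinv2 : (1 - F ℓ)⁻¹ ≤ 2 := by
        rw [inv_le_comm₀ h1 (by norm_num)]; linarith
      have heq : (1 - F ℓ)⁻¹ - 1 = F ℓ * (1 - F ℓ)⁻¹ := by
        field_simp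
        ring
      rw [← Real.log_inv]
      calc Real.log (1 - F ℓ)⁻¹ ≤ (1 - F ℓ)⁻¹ - 1 := hlog1
        _ = F ℓ * (1 - F ℓ)⁻¹ := heq
        _ ≤ F ℓ * 2 := mul_le_mul_of_nonneg_left hinv2 h0
        _ = 2 * F ℓ := by ring
    have keypos : ∀ ℓ : I, 0 ≤ -Real.log (1 - F ℓ) := by
      intro ℓ
      rw [neg_nonneg]
      exact Real.log_nonpos (by linarith [hF1 ℓ]) (by linarith [hF0 ℓ])
    have hneg := Summable.of_nonneg_of_le keypos key (hsF.mul_left 2)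
    exact (hneg.neg).congr (fun ℓ => neg_neg _)
  have hM : Multipliable (fun ℓ : I => 1 - F ℓ) :=
    (hlog.hasSum.rexp).multipliable.congr (fun ℓ => Real.exp_log (hF1 ℓ))
  constructor
  · exact hM.congr (fun ℓ => rfl)
  · have hwei : 1 - ∑' ℓ : I, F ℓ ≤ ∏' ℓ : I, (1 - F ℓ) := by
      refine ge_of_tendsto' hM.hasProd (fun s => ?_)
      calc 1 - ∑' ℓ, F ℓ ≤ 1 - ∑ ℓ ∈ s, F ℓ := by
            linarith [Summable.sum_le_tsum s (fun i _ => hF0 i) hsF]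
        _ ≤ ∏ ℓ ∈ s, (1 - F ℓ) :=
            my_prod_one_sub_ge F hF0 (fun ℓ => by linarith [hFhalf ℓ]) s
    have hstrict : ∑' ℓ : I, F ℓ < ∑' ℓ : I, G ℓ := by
      have h2 : (2 : ℕ).Prime ∧ (2:ℕ) ≠ 3 := ⟨Nat.prime_two, by norm_num⟩
      exact Summable.tsum_lt_tsum (fun ℓ => (hFG ℓ).le) (hFG ⟨2, h2⟩) hsF hsG
    have hGsum : ∑' ℓ : I, G ℓ ≤ (zetaNat 3 - 1) + (zetaNat 4 - 1) + (zetaNat 7 - 1) := by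
      have hsplit : ∑' ℓ : I, G ℓ =
          (∑' ℓ : I, ((ℓ.1 : ℝ) ^ 3)⁻¹) + (∑' ℓ : I, ((ℓ.1 : ℝ) ^ 4)⁻¹)
            + (∑' ℓ : I, ((ℓ.1 : ℝ) ^ 7)⁻¹) := by
        rw [← Summable.tsum_add (my_summable_subtype 3 (by norm_num)) (my_summable_subtype 4 (by norm_num)),
          ← Summable.tsum_add ((my_summable_subtype 3 (by norm_num)).add
            (my_summable_subtype 4 (by norm_num))) (my_summable_subtype 7 (by norm_num))]
      rw [hsplit]
      have t3 := my_tail_le 3 (by norm_num)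
      have t4 := my_tail_le 4 (by norm_num)
      have t7 := my_tail_le 7 (by norm_num)
      linarith
    have hprodeq : (∏' ℓ : I,
        (1 - (1 - ((ℓ.1 : ℝ) ^ 10)⁻¹)⁻¹ * (1 - (ℓ.1 : ℝ)⁻¹) *
          (((ℓ.1 : ℝ) ^ 3)⁻¹ + ((ℓ.1 : ℝ) ^ 4)⁻¹ + ((ℓ.1 : ℝ) ^ 7)⁻¹)))
        = ∏' ℓ : I, (1 - F ℓ) := by
      apply tprod_congr; intro ℓ; simp only [hF]
    rw [gt_iff_lt, hprodeq]
    linarith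
end

section
/- Let ℓ be a prime. Then the number of tuples a = (a₁,a₂,a₃,a₄,a₆) ∈ 𝔽_ℓ⁵ with Δ(a) = 0 equals ℓ⁴; equivalently, the proportion of Weierstrass equations over 𝔽_ℓ with nonzero discriminant (good reduction, Kodaira type I₀) is (ℓ−1)/ℓ. (This is the type-I₀ local density in Theorem 3.3, due to Cremona–Sadek.) -/
def wDisc {R : Type*} [CommRing R] (a : Fin 5 → R) : R :=
  let a₁ := a 0; let a₂ := a 1; let a₃ := a 2; let a₄ := a 3; let a₆ := a 4;
  let b₂ := a₁ ^ 2 + 4 * a₂;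
  let b₄ := a₁ * a₃ + 2 * a₄;
  let b₆ := a₃ ^ 2 + 4 * a₆;
  let b₈ := a₁ ^ 2 * a₆ + 4 * a₂ * a₆ - a₁ * a₃ * a₄ + a₂ * a₃ ^ 2 - a₄ ^ 2;
  -b₂ ^ 2 * b₈ - 8 * b₄ ^ 3 - 27 * b₆ ^ 2 + 9 * b₂ * b₄ * b₆

section Helpers

variable {K : Type*} [Field K]

/-- The singular Weierstrass tuple obtained by translating `(0,0,0,-3u²,2u³)`. -/
def wMap (r s t u : K) : Fin 5 → K :=
  ![2*s, 3*r - s^2, 2*t, -3*u^2 + 3*r^2 - 2*s*t, 2*u^3 - 3*r*u^2 + r^3 - t^2]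

lemma wMap_disc (r s t u : K) : wDisc (wMap r s t u) = 0 := by
  simp only [wDisc, wMap, Matrix.cons_val_zero, Matrix.cons_val_one, Matrix.head_cons,
    Matrix.cons_val_two, Matrix.tail_cons, Matrix.cons_val_three, Matrix.cons_val_four]
  ring

noncomputable def wS (a : Fin 5 → K) : K := a 0 / 2
noncomputable def wT (a : Fin 5 → K) : K := a 2 / 2
noncomputable def wR (a : Fin 5 → K) : K := (a 1 + (a 0 / 2)^2) / 3
noncomputable def wA (a : Fin 5 → K) : K := a 3 - 3*(wR a)^2 + 2*(wS a)*(wT a)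
noncomputable def wB (a : Fin 5 → K) : K := a 4 - wR a * wA a - (wR a)^3 + (wT a)^2
open Classical in
noncomputable def wU (a : Fin 5 → K) : K := if wA a = 0 then 0 else -3*wB a/(2*wA a)

lemma wMap_apply (r s t u : K) :
    wMap r s t u 0 = 2*s ∧ wMap r s t u 1 = 3*r - s^2 ∧ wMap r s t u 2 = 2*t ∧
    wMap r s t u 3 = -3*u^2 + 3*r^2 - 2*s*t ∧
    wMap r s t u 4 = 2*u^3 - 3*r*u^2 + r^3 - t^2 := by
  refine ⟨rfl, rfl, rfl, rfl, rfl⟩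

variable (h2 : (2:K) ≠ 0) (h3 : (3:K) ≠ 0)

include h2 in
lemma wS_wMap (r s t u : K) : wS (wMap r s t u) = s := by
  simp only [wS, (wMap_apply r s t u).1]; field_simp

include h2 in
lemma wT_wMap (r s t u : K) : wT (wMap r s t u) = t := by
  simp only [wT, (wMap_apply r s t u).2.2.1]; field_simp

include h2 h3 in
lemma wR_wMap (r s t u : K) : wR (wMap r s t u) = r := by
  simp only [wR, (wMap_apply r s t u).1, (wMap_apply r s t u).2.1]
  field_simp; ring

include h2 h3 in
lemma wA_wMap (r s t u : K) : wA (wMap r s t u) = -3*u^2 := by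
  simp only [wA, wR_wMap h2 h3, wS_wMap h2, wT_wMap h2, (wMap_apply r s t u).2.2.2.1]
  ring

include h2 h3 in
lemma wB_wMap (r s t u : K) : wB (wMap r s t u) = 2*u^3 := by
  simp only [wB, wR_wMap h2 h3, wT_wMap h2, wA_wMap h2 h3, (wMap_apply r s t u).2.2.2.2]
  ring

include h2 h3 in
lemma wU_wMap (r s t u : K) : wU (wMap r s t u) = u := by
  rw [wU]
  by_cases hu : u = 0
  · simp [wA_wMap h2 h3, wB_wMap h2 h3, hu]
  · have hA0 : (-3*u^2 : K) ≠ 0 := by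
      intro h
      have h' : (3:K)*u^2 = 0 := by linear_combination -h
      rcases mul_eq_zero.mp h' with h'' | h''
      · exact h3 h''
      · exact hu (pow_eq_zero_iff (two_ne_zero) |>.mp h'')
    have hcond : ¬ (wA (wMap r s t u) = 0) := by rw [wA_wMap h2 h3]; exact hA0
    rw [if_neg hcond, wA_wMap h2 h3, wB_wMap h2 h3]
    field_simp

def wMapAB (r s t A B : K) : Fin 5 → K :=
  ![2*s, 3*r - s^2, 2*t, A + 3*r^2 - 2*s*t, B + r*A + r^3 - t^2]

set_option maxHeartbeats 1000000 in
lemma wDisc_wMapAB (r s t A B : K) : wDisc (wMapAB r s t A B) = -64*A^3 - 432*B^2 := by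
  simp only [wDisc, wMapAB, Matrix.cons_val_zero, Matrix.cons_val_one, Matrix.head_cons,
    Matrix.cons_val_two, Matrix.tail_cons, Matrix.cons_val_three, Matrix.cons_val_four]
  ring

include h2 h3 in
lemma wMapAB_eq (a : Fin 5 → K) :
    wMapAB (wR a) (wS a) (wT a) (wA a) (wB a) = a := by
  funext i
  fin_cases i
  · show 2 * wS a = a 0
    rw [wS]; field_simp
  · show 3 * wR a - (wS a)^2 = a 1
    rw [wR, wS]; field_simp; ring
  · show 2 * wT a = a 2
    rw [wT]; field_simp
  · show wA a + 3*(wR a)^2 - 2*(wS a)*(wT a) = a 3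
    rw [wA]; ring
  · show wB a + wR a * wA a + (wR a)^3 - (wT a)^2 = a 4
    rw [wB]; ring

include h2 h3 in
lemma wDisc_eq (a : Fin 5 → K) :
    wDisc a = -64*(wA a)^3 - 432*(wB a)^2 := by
  conv_lhs => rw [← wMapAB_eq h2 h3 a]
  exact wDisc_wMapAB _ _ _ _ _

include h2 h3 in
lemma wMap_inv (a : Fin 5 → K) (ha : wDisc a = 0) :
    wMap (wR a) (wS a) (wT a) (wU a) = a := by
  have key : 4*(wA a)^3 + 27*(wB a)^2 = 0 := by
    have h := (wDisc_eq h2 h3 a).symm.trans ha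
    have h16 : (16:K) ≠ 0 := by
      intro h'; apply h2
      have : (16:K) = 2*2*2*2 := by norm_num
      rw [this] at h'
      rcases mul_eq_zero.mp h' with h'' | h''
      · rcases mul_eq_zero.mp h'' with h3' | h3'
        · rcases mul_eq_zero.mp h3' with h4 | h4 <;> assumption
        · assumption
      · assumption
    have h0 : (-16:K) * (4*(wA a)^3 + 27*(wB a)^2) = 0 := by linear_combination h
    rcases mul_eq_zero.mp h0 with h' | h'
    · exact absurd h' (by simpa using h16)
    · exact h'
  have huA : -3*(wU a)^2 = wA a ∧ 2*(wU a)^3 = wB a := by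
    by_cases h : wA a = 0
    · have hB0 : wB a = 0 := by
        have h27 : (27:K) ≠ 0 := by
          intro h'; apply h3
          have : (27:K) = 3*3*3 := by norm_num
          rw [this] at h'
          rcases mul_eq_zero.mp h' with h'' | h''
          · rcases mul_eq_zero.mp h'' with h4 | h4 <;> assumption
          · assumption
        have hb : (27:K) * (wB a)^2 = 0 := by rw [h] at key; linear_combination key
        rcases mul_eq_zero.mp hb with h' | h'
        · exact absurd h' h27
        · exact pow_eq_zero_iff (two_ne_zero) |>.mp h'
      rw [wU, if_pos h, h, hB0]; norm_num
    · have hu' : wU a = -3*wB a/(2*wA a) := by rw [wU, if_neg h]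
      have h2A : 2*wA a ≠ 0 := mul_ne_zero h2 h
      constructor
      · rw [hu']; field_simp [h2]; linear_combination -key
      · rw [hu']; field_simp [h2]; linear_combination (-wB a) * key
  funext i
  fin_cases i
  · show 2 * wS a = a 0
    rw [wS]; field_simp
  · show 3 * wR a - (wS a)^2 = a 1
    rw [wR, wS]; field_simp; ring
  · show 2 * wT a = a 2
    rw [wT]; field_simp
  · show -3*(wU a)^2 + 3*(wR a)^2 - 2*(wS a)*(wT a) = a 3
    rw [huA.1, wA]; ring
  · show 2*(wU a)^3 - 3*(wR a)*(wU a)^2 + (wR a)^3 - (wT a)^2 = a 4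
    have : -3*(wR a)*(wU a)^2 = wR a * wA a := by rw [← huA.1]; ring
    rw [show 2*(wU a)^3 - 3*(wR a)*(wU a)^2 + (wR a)^3 - (wT a)^2
        = 2*(wU a)^3 + (-3*(wR a)*(wU a)^2) + (wR a)^3 - (wT a)^2 by ring,
      huA.2, this, wB]
    ring

noncomputable def singEquiv (h2 : (2:K) ≠ 0) (h3 : (3:K) ≠ 0) :
    (K × K × K × K) ≃ {a : Fin 5 → K // wDisc a = 0} where
  toFun p := ⟨wMap p.1 p.2.1 p.2.2.1 p.2.2.2, wMap_disc _ _ _ _⟩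
  invFun a := (wR a.1, wS a.1, wT a.1, wU a.1)
  left_inv := by
    rintro ⟨r, s, t, u⟩
    simp only [wR_wMap h2 h3, wS_wMap h2, wT_wMap h2, wU_wMap h2 h3]
  right_inv := by
    rintro ⟨a, ha⟩
    exact Subtype.ext (wMap_inv h2 h3 a ha)

end Helpers

set_option maxHeartbeats 1000000 in
/-- For a prime `ℓ`, the number of tuples `a ∈ 𝔽_ℓ⁵` with `Δ(a) = 0` is exactly `ℓ⁴`;
equivalently, the proportion of Weierstrass equations over `𝔽_ℓ` with good reduction
(Kodaira type I₀) is `(ℓ-1)/ℓ`. -/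
theorem card_singular_weierstrass (ℓ : ℕ) (hℓ : ℓ.Prime) :
    Nat.card {a : Fin 5 → ZMod ℓ // wDisc a = 0} = ℓ ^ 4 := by
  by_cases hl2 : ℓ = 2
  · subst hl2; rw [Nat.card_eq_fintype_card]; decide
  by_cases hl3 : ℓ = 3
  · subst hl3; rw [Nat.card_eq_fintype_card]; decide
  · haveI : Fact ℓ.Prime := ⟨hℓ⟩
    have h2 : (2 : ZMod ℓ) ≠ 0 := by
      intro h
      have : ℓ ∣ 2 := by
        have := (ZMod.natCast_eq_zero_iff 2 ℓ).mp (by exact_mod_cast h)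
        exact this
      exact hl2 ((Nat.prime_dvd_prime_iff_eq hℓ Nat.prime_two).mp this)
    have h3 : (3 : ZMod ℓ) ≠ 0 := by
      intro h
      have : ℓ ∣ 3 := by
        have := (ZMod.natCast_eq_zero_iff 3 ℓ).mp (by exact_mod_cast h)
        exact this
      exact hl3 ((Nat.prime_dvd_prime_iff_eq hℓ Nat.prime_three).mp this)
    rw [← Nat.card_congr (singEquiv h2 h3)]
    simp [Nat.card_prod, Nat.card_zmod]
    ring
end

section
/- Let p be a prime. Then the set {a ∈ ℤ⁵ : p divides Δ(a)} of integral Weierstrass equations whose discriminant is divisible by p has density exactly 1/p; that is, as the real number x → ∞, #{a ∈ ℤ⁵ : p ∣ Δ(a) and |a_i| < x^i for i = 1,2,3,4,6} / (2⁵x¹⁶) tends to 1/p. (This is the value 𝔡(S_p'') = 1/p of the density of Weierstrass equations with bad reduction at p used in the proof of Theorem 4.3.) -/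
/-- The weights `(1, 2, 3, 4, 6)` attached to the coefficients `(a₁, a₂, a₃, a₄, a₆)`
of a Weierstrass equation. -/
def wt : Fin 5 → ℕ := ![1, 2, 3, 4, 6]

/-- The number of tuples `a = (a₁, a₂, a₃, a₄, a₆) ∈ S ⊆ ℤ⁵` with `|aᵢ| < x^{wᵢ}`
for the weights `(w₁, w₂, w₃, w₄, w₆) = (1, 2, 3, 4, 6)`. -/
noncomputable def boxCount (S : Set (Fin 5 → ℤ)) (x : ℝ) : ℕ :=
  Nat.card {a : Fin 5 → ℤ // a ∈ S ∧ ∀ i, |(a i : ℝ)| < x ^ wt i}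


section AlgebraicCount

variable {K : Type*} [Field K]

def shA (c1 c2 c3 a4 : K) : K := (24*(c1*c3+2*a4) - (c1^2+4*c2)^2) * (48:K)⁻¹
def shB (c1 c2 c3 a4 a6 : K) : K :=
  ((c1^2+4*c2)^3 - 36*(c1^2+4*c2)*(c1*c3+2*a4) + 216*(c3^2+4*a6)) * (864:K)⁻¹

lemma key_identity (h2 : (2:K) ≠ 0) (h3 : (3:K) ≠ 0) (a : Fin 5 → K) :
    wDisc a = -16 * (4 * (shA (a 0) (a 1) (a 2) (a 3))^3
      + 27 * (shB (a 0) (a 1) (a 2) (a 3) (a 4))^2) := by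
  have h48 : (48:K) ≠ 0 := by
    have : (48:K) = 2^4*3 := by norm_num
    rw [this]; exact mul_ne_zero (pow_ne_zero _ h2) h3
  have h864 : (864:K) ≠ 0 := by
    have : (864:K) = 2^5*3^3 := by norm_num
    rw [this]; exact mul_ne_zero (pow_ne_zero _ h2) (pow_ne_zero _ h3)
  simp only [wDisc, shA, shB]
  field_simp
  ring

/-- wDisc vanishes iff the short form discriminant vanishes -/
lemma wDisc_eq_zero_iff (h2 : (2:K) ≠ 0) (h3 : (3:K) ≠ 0) (a : Fin 5 → K) :
    wDisc a = 0 ↔ 4 * (shA (a 0) (a 1) (a 2) (a 3))^3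
      + 27 * (shB (a 0) (a 1) (a 2) (a 3) (a 4))^2 = 0 := by
  rw [key_identity h2 h3]
  constructor
  · intro h
    have h16 : (-16:K) ≠ 0 := by
      have : (-16:K) = -(2^4) := by norm_num
      rw [this]; exact neg_ne_zero.mpr (pow_ne_zero _ h2)
    exact (mul_eq_zero.mp h).resolve_left h16
  · intro h; rw [h, mul_zero]

/-- inverse of the (a4, a6) ↦ (A, B) affine change, evaluated at A = -3t², B = 2t³ -/
def phiA4 (c1 c2 c3 t : K) : K := -3*t^2 - c1*c3*(2:K)⁻¹ + (c1^2+4*c2)^2*(48:K)⁻¹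
def phiA6 (c1 c2 c3 t : K) : K :=
  2*t^3 - ((c1^2+4*c2)^3 - 36*(c1^2+4*c2)*(c1*c3+2*phiA4 c1 c2 c3 t))*(864:K)⁻¹
    - c3^2*(4:K)⁻¹

def Phi (q : Fin 4 → K) : Fin 5 → K :=
  ![q 0, q 1, q 2, phiA4 (q 0) (q 1) (q 2) (q 3), phiA6 (q 0) (q 1) (q 2) (q 3)]

lemma shA_phi (h2 : (2:K) ≠ 0) (h3 : (3:K) ≠ 0) (c1 c2 c3 t : K) :
    shA c1 c2 c3 (phiA4 c1 c2 c3 t) = -3*t^2 := by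
  have h48 : (48:K) ≠ 0 := by
    have : (48:K) = 2^4*3 := by norm_num
    rw [this]; exact mul_ne_zero (pow_ne_zero _ h2) h3
  simp only [shA, phiA4]
  field_simp
  ring

lemma shB_phi (h2 : (2:K) ≠ 0) (h3 : (3:K) ≠ 0) (c1 c2 c3 t : K) :
    shB c1 c2 c3 (phiA4 c1 c2 c3 t) (phiA6 c1 c2 c3 t) = 2*t^3 := by
  have h48 : (48:K) ≠ 0 := by
    have : (48:K) = 2^4*3 := by norm_num
    rw [this]; exact mul_ne_zero (pow_ne_zero _ h2) h3
  have h864 : (864:K) ≠ 0 := by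
    have : (864:K) = 2^5*3^3 := by norm_num
    rw [this]; exact mul_ne_zero (pow_ne_zero _ h2) (pow_ne_zero _ h3)
  have h4 : (4:K) ≠ 0 := by
    have : (4:K) = 2^2 := by norm_num
    rw [this]; exact pow_ne_zero _ h2
  have hC : (27518828544:K) ≠ 0 := by
    have : (27518828544:K) = 2^22*3^8 := by norm_num
    rw [this]; exact mul_ne_zero (pow_ne_zero _ h2) (pow_ne_zero _ h3)
  simp only [shB, phiA4, phiA6]
  field_simp
  ring


lemma phi_cancel (h2 : (2:K) ≠ 0) (h3 : (3:K) ≠ 0) {c1 c2 c3 t t' : K}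
    (hA : phiA4 c1 c2 c3 t = phiA4 c1 c2 c3 t')
    (hB : phiA6 c1 c2 c3 t = phiA6 c1 c2 c3 t') : t = t' := by
  simp only [phiA4, phiA6] at hA hB
  have ht2 : t^2 = t'^2 := by
    have h3' : (3:K) ≠ 0 := h3
    have h : (3:K) * t^2 = 3 * t'^2 := by linear_combination -hA
    exact mul_left_cancel₀ h3' h
  have ht3 : t^3 = t'^3 := by
    have h : (2:K) * t^3 = 2 * t'^3 := by
      linear_combination hB - (72*(c1^2+4*c2)*(864:K)⁻¹) * hA
    exact mul_left_cancel₀ h2 h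
  by_cases ht' : t' = 0
  · subst ht'
    have : t^2 = 0 := by simpa using ht2
    exact pow_eq_zero_iff two_ne_zero |>.mp this
  · have e : t * t'^2 = t' * t'^2 := by
      calc t * t'^2 = t^3 := by rw [← ht2]; ring
        _ = t'^3 := ht3
        _ = t' * t'^2 := by ring
    exact mul_right_cancel₀ (pow_ne_zero 2 ht') e

lemma exists_t (h2 : (2:K) ≠ 0) (h3 : (3:K) ≠ 0) {A B : K}
    (h : 4*A^3 + 27*B^2 = 0) : ∃ t : K, -3*t^2 = A ∧ 2*t^3 = B := by
  have h4 : (4:K) ≠ 0 := by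
    have : (4:K) = 2^2 := by norm_num
    rw [this]; exact pow_ne_zero _ h2
  have h27 : (27:K) ≠ 0 := by
    have : (27:K) = 3^3 := by norm_num
    rw [this]; exact pow_ne_zero _ h3
  by_cases hA : A = 0
  · subst hA
    have hB2 : (27:K) * B^2 = 0 := by linear_combination h
    have hB : B = 0 := by
      have := (mul_eq_zero.mp hB2).resolve_left h27
      exact pow_eq_zero_iff two_ne_zero |>.mp this
    exact ⟨0, by norm_num, by rw [hB]; norm_num⟩
  · have hB : B ≠ 0 := by
      intro hB0
      apply hA
      rw [hB0] at h
      have hA3 : (4:K) * A^3 = 0 := by linear_combination h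
      have := (mul_eq_zero.mp hA3).resolve_left h4
      exact pow_eq_zero_iff three_ne_zero |>.mp this
    refine ⟨-3*B*(2*A)⁻¹, ?_, ?_⟩
    · field_simp
      linear_combination -h
    · field_simp
      linear_combination -h

lemma phiA4_inv (h2 : (2:K) ≠ 0) (h3 : (3:K) ≠ 0) {c1 c2 c3 a4 t : K}
    (hA : -3*t^2 = shA c1 c2 c3 a4) : phiA4 c1 c2 c3 t = a4 := by
  have h48 : (48:K) ≠ 0 := by
    have : (48:K) = 2^4*3 := by norm_num
    rw [this]; exact mul_ne_zero (pow_ne_zero _ h2) h3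
  rw [phiA4, hA, shA]
  field_simp
  ring

lemma phiA6_inv (h2 : (2:K) ≠ 0) (h3 : (3:K) ≠ 0) {c1 c2 c3 a4 a6 t : K}
    (hA4 : phiA4 c1 c2 c3 t = a4) (hB : 2*t^3 = shB c1 c2 c3 a4 a6) :
    phiA6 c1 c2 c3 t = a6 := by
  have h48 : (48:K) ≠ 0 := by
    have : (48:K) = 2^4*3 := by norm_num
    rw [this]; exact mul_ne_zero (pow_ne_zero _ h2) h3
  have h864 : (864:K) ≠ 0 := by
    have : (864:K) = 2^5*3^3 := by norm_num
    rw [this]; exact mul_ne_zero (pow_ne_zero _ h2) (pow_ne_zero _ h3)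
  have h4 : (4:K) ≠ 0 := by
    have : (4:K) = 2^2 := by norm_num
    rw [this]; exact pow_ne_zero _ h2
  rw [phiA6, hA4, hB, shB]
  field_simp
  ring

lemma card_wDisc_zero (K : Type*) [Field K] [Fintype K] [DecidableEq K]
    (h2 : (2:K) ≠ 0) (h3 : (3:K) ≠ 0) :
    (Finset.univ.filter fun a : Fin 5 → K => wDisc a = 0).card
      = Fintype.card K ^ 4 := by
  have : Fintype.card K ^ 4 = (Finset.univ : Finset (Fin 4 → K)).card := by
    simp [Fintype.card_fun]
  rw [this]
  symm
  apply Finset.card_bij (fun q _ => Phi q)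
  · intro q _
    simp only [Finset.mem_filter, Finset.mem_univ, true_and]
    rw [wDisc_eq_zero_iff h2 h3]
    simp only [Phi, Matrix.cons_val_zero, Matrix.cons_val_one, Matrix.head_cons,
      Matrix.cons_val_two, Matrix.tail_cons, Matrix.cons_val_three, Matrix.cons_val_four]
    rw [shA_phi h2 h3, shB_phi h2 h3]
    ring
  · intro q _ q' _ h
    have h0 : q 0 = q' 0 := by simpa [Phi] using congr_fun h 0
    have h1 : q 1 = q' 1 := by simpa [Phi] using congr_fun h 1
    have h2' : q 2 = q' 2 := by simpa [Phi] using congr_fun h 2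
    have h3' : phiA4 (q 0) (q 1) (q 2) (q 3) = phiA4 (q 0) (q 1) (q 2) (q' 3) := by
      have := congr_fun h 3
      simp only [Phi, Matrix.cons_val_three, Matrix.tail_cons, Matrix.head_cons,
        Matrix.cons_val_zero, Matrix.cons_val_one, Matrix.cons_val_two] at this
      rw [h0, h1, h2'] ; rw [← h0, ← h1, ← h2'] at this ⊢ ; rw [h0, h1, h2'] at this ⊢
      exact this
    have h4' : phiA6 (q 0) (q 1) (q 2) (q 3) = phiA6 (q 0) (q 1) (q 2) (q' 3) := by
      have := congr_fun h 4
      simp only [Phi, Matrix.cons_val_four, Matrix.tail_cons, Matrix.head_cons,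
        Matrix.cons_val_zero, Matrix.cons_val_one, Matrix.cons_val_two] at this
      rw [h0, h1, h2'] at this ⊢
      exact this
    have ht : q 3 = q' 3 := phi_cancel h2 h3 h3' h4'
    funext i
    fin_cases i
    · exact h0
    · exact h1
    · exact h2'
    · exact ht
  · intro b hb
    simp only [Finset.mem_filter, Finset.mem_univ, true_and] at hb
    rw [wDisc_eq_zero_iff h2 h3] at hb
    obtain ⟨t, hA, hB⟩ := exists_t h2 h3 hb
    refine ⟨![b 0, b 1, b 2, t], Finset.mem_univ _, ?_⟩
    have hA4 : phiA4 (b 0) (b 1) (b 2) t = b 3 := phiA4_inv h2 h3 hA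
    have hA6 : phiA6 (b 0) (b 1) (b 2) t = b 4 := phiA6_inv h2 h3 hA4 hB
    funext i
    fin_cases i <;>
      simp [Phi, hA4, hA6]


lemma card_bad_two :
    (Finset.univ.filter fun r : Fin 5 → ZMod 2 => wDisc r = 0).card = 2 ^ 4 := by
  decide

lemma card_bad_three :
    (Finset.univ.filter fun r : Fin 5 → ZMod 3 => wDisc r = 0).card = 3 ^ 4 := by
  decide

lemma card_bad (p : ℕ) [NeZero p] (hp : p.Prime) :
    (Finset.univ.filter fun r : Fin 5 → ZMod p => wDisc r = 0).card = p ^ 4 := by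
  haveI : Fact p.Prime := ⟨hp⟩
  rcases eq_or_ne p 2 with rfl | hp2
  · exact card_bad_two
  rcases eq_or_ne p 3 with rfl | hp3
  · exact card_bad_three
  have h2 : (2 : ZMod p) ≠ 0 := by
    intro h
    have h' : ((2:ℕ) : ZMod p) = 0 := by exact_mod_cast h
    have := (ZMod.natCast_eq_zero_iff 2 p).mp h'
    exact hp2 ((Nat.prime_dvd_prime_iff_eq hp Nat.prime_two).mp this)
  have h3 : (3 : ZMod p) ≠ 0 := by
    intro h
    have h' : ((3:ℕ) : ZMod p) = 0 := by exact_mod_cast h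
    have := (ZMod.natCast_eq_zero_iff 3 p).mp h'
    exact hp3 ((Nat.prime_dvd_prime_iff_eq hp Nat.prime_three).mp this)
  have hcw := card_wDisc_zero (ZMod p) h2 h3
  rw [ZMod.card] at hcw
  convert hcw using 2

end AlgebraicCount

section LatticeCount

open Finset


open Finset

variable {p : ℕ} [NeZero p]

lemma count_block (c : ZMod p) (b : ℤ) :
    ((Finset.Ico b (b + p)).filter fun n : ℤ => (n : ZMod p) = c).card = 1 := by
  have hp : 0 < p := Nat.pos_of_ne_zero (NeZero.ne p)
  rw [Finset.card_eq_one]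
  refine ⟨b + ((c - (b : ZMod p)).val : ℤ), ?_⟩
  ext n
  simp only [Finset.mem_filter, Finset.mem_Ico, Finset.mem_singleton]
  have hval : (((c - (b : ZMod p)).val : ℤ) : ZMod p) = c - (b : ZMod p) := by
    push_cast
    exact ZMod.natCast_rightInverse _
  constructor
  · rintro ⟨⟨h1, h2⟩, h3⟩
    have hdvd : (p:ℤ) ∣ n - (b + ((c - (b : ZMod p)).val : ℤ)) := by
      rw [← ZMod.intCast_zmod_eq_zero_iff_dvd]
      push_cast
      rw [show (((c - (b : ZMod p)).val : ℕ) : ZMod p) = c - (b:ZMod p) from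
        ZMod.natCast_rightInverse _]
      rw [show ((n:ZMod p) = c) from h3]
      ring
    have habs : |n - (b + ((c - (b : ZMod p)).val : ℤ))| < (p:ℤ) := by
      have hv : ((c - (b : ZMod p)).val : ℤ) < p := by
        exact_mod_cast ZMod.val_lt _
      have hv0 : (0:ℤ) ≤ ((c - (b : ZMod p)).val : ℤ) := Int.ofNat_nonneg _
      rw [abs_lt]; omega
    have := Int.eq_zero_of_abs_lt_dvd hdvd habs
    omega
  · rintro rfl
    have hv : ((c - (b : ZMod p)).val : ℤ) < p := by exact_mod_cast ZMod.val_lt _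
    have hv0 : (0:ℤ) ≤ ((c - (b : ZMod p)).val : ℤ) := Int.ofNat_nonneg _
    refine ⟨⟨by omega, by omega⟩, ?_⟩
    push_cast
    rw [show (((c - (b : ZMod p)).val : ℕ) : ZMod p) = c - (b:ZMod p) from
      ZMod.natCast_rightInverse _]
    ring

lemma count_Ico (c : ZMod p) (b : ℤ) (m : ℕ) :
    ((Finset.Ico b (b + p * m)).filter fun n : ℤ => (n : ZMod p) = c).card = m := by
  induction m with
  | zero => simp
  | succ k ih =>
      have hsplit : (b + (p:ℤ) * ((k:ℕ)+1 : ℕ)) = (b + p * k) + p := by push_cast; ring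
      have h1 : b ≤ b + (p:ℤ) * k := le_add_of_nonneg_right (by positivity)
      have h2 : b + (p:ℤ) * k ≤ (b + p * k) + p :=
        le_add_of_nonneg_right (by positivity)
      rw [hsplit, ← Finset.Ico_union_Ico_eq_Ico h1 h2, Finset.filter_union,
        Finset.card_union_of_disjoint
          (Finset.disjoint_filter_filter (Finset.Ico_disjoint_Ico_consecutive _ _ _)),
        ih, count_block]

lemma count_Ioo_bounds (c : ZMod p) {B : ℤ} (hB : 1 ≤ B) :
    ∃ m : ℕ, (p:ℤ) * m ≤ 2*B - 1 ∧ 2*B - 1 < (p:ℤ) * (m+1) ∧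
      m ≤ ((Finset.Ioo (-B) B).filter fun n : ℤ => (n : ZMod p) = c).card ∧
      ((Finset.Ioo (-B) B).filter fun n : ℤ => (n : ZMod p) = c).card ≤ m + 1 := by
  have hp : 0 < p := Nat.pos_of_ne_zero (NeZero.ne p)
  set L : ℕ := (2*B - 1).toNat with hL
  have hLeq : (L : ℤ) = 2*B - 1 := Int.toNat_of_nonneg (by omega)
  obtain ⟨m, hdm, hml⟩ : ∃ m : ℕ, p * m + L % p = L ∧ L % p < p :=
    ⟨L / p, Nat.div_add_mod L p, Nat.mod_lt L hp⟩
  have hmle : p * m ≤ L := by omega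
  have hmlt : L < p * (m + 1) := by rw [Nat.mul_succ]; omega
  have hmleZ : (p:ℤ) * m ≤ 2*B - 1 := by
    rw [← hLeq]; exact_mod_cast hmle
  have hmltZ : 2*B - 1 < (p:ℤ) * (m+1) := by
    rw [← hLeq]; exact_mod_cast hmlt
  refine ⟨m, hmleZ, hmltZ, ?_, ?_⟩
  · have hsub : Finset.Ico (-B+1) (-B+1 + (p:ℤ)*m) ⊆ Finset.Ioo (-B) B := by
      intro n hn
      simp only [Finset.mem_Ico, Finset.mem_Ioo] at hn ⊢
      omega
    calc m = ((Finset.Ico (-B+1) (-B+1 + (p:ℤ)*m)).filter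
          fun n : ℤ => (n : ZMod p) = c).card := (count_Ico c _ m).symm
      _ ≤ _ := Finset.card_le_card (Finset.filter_subset_filter _ hsub)
  · have hsub : Finset.Ioo (-B) B ⊆ Finset.Ico (-B+1) (-B+1 + (p:ℤ)*(m+1)) := by
      intro n hn
      simp only [Finset.mem_Ico, Finset.mem_Ioo] at hn ⊢
      constructor
      · omega
      · push_cast at hmltZ ⊢
        omega
    calc ((Finset.Ioo (-B) B).filter fun n : ℤ => (n : ZMod p) = c).card
        ≤ ((Finset.Ico (-B+1) (-B+1 + (p:ℤ)*(m+1))).filter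
            fun n : ℤ => (n : ZMod p) = c).card :=
          Finset.card_le_card (Finset.filter_subset_filter _ hsub)
      _ = m + 1 := by
          rw [show (-B+1 + (p:ℤ)*(m+1)) = -B+1 + (p:ℤ)*((m+1 : ℕ)) by push_cast; ring]
          exact count_Ico c _ (m+1)

set_option maxHeartbeats 1000000 in
lemma tendsto_cnt (c : ZMod p) (w : ℕ) (hw : w ≠ 0) :
    Filter.Tendsto
      (fun x : ℝ =>
        (((Finset.Ioo (-(⌈x ^ w⌉ : ℤ)) ⌈x ^ w⌉).filter
          fun n : ℤ => (n : ZMod p) = c).card : ℝ) / (2 * x ^ w))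
      Filter.atTop (nhds ((p : ℝ)⁻¹)) := by
  have hp : 0 < p := Nat.pos_of_ne_zero (NeZero.ne p)
  have hpR : (0:ℝ) < p := by exact_mod_cast hp
  set C : ℝ := (p:ℝ)⁻¹ * 2⁻¹ + 2⁻¹ with hC
  have hinv : Filter.Tendsto (fun x : ℝ => (x ^ w)⁻¹) Filter.atTop (nhds 0) :=
    (Filter.tendsto_pow_atTop hw).inv_tendsto_atTop
  have hlo : Filter.Tendsto (fun x : ℝ => (p:ℝ)⁻¹ - C * (x ^ w)⁻¹)
      Filter.atTop (nhds ((p:ℝ)⁻¹)) := by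
    have h := Filter.Tendsto.sub
      (tendsto_const_nhds : Filter.Tendsto (fun _ : ℝ => (p:ℝ)⁻¹) Filter.atTop _)
      (hinv.const_mul C)
    simpa using h
  have hhi : Filter.Tendsto (fun x : ℝ => (p:ℝ)⁻¹ + C * (x ^ w)⁻¹)
      Filter.atTop (nhds ((p:ℝ)⁻¹)) := by
    have h := Filter.Tendsto.add
      (tendsto_const_nhds : Filter.Tendsto (fun _ : ℝ => (p:ℝ)⁻¹) Filter.atTop _)
      (hinv.const_mul C)
    simpa using h
  have hiden : ∀ y : ℝ, 0 < y → ((2*y - 1)/p - 1)/(2*y) = (p:ℝ)⁻¹ - C * y⁻¹ := by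
    intro y hy
    rw [hC]
    field_simp
    ring
  have hiden2 : ∀ y : ℝ, 0 < y → ((2*y + 1)/p + 1)/(2*y) = (p:ℝ)⁻¹ + C * y⁻¹ := by
    intro y hy
    rw [hC]
    field_simp
    ring
  apply tendsto_of_tendsto_of_tendsto_of_le_of_le' hlo hhi
  · filter_upwards [Filter.eventually_ge_atTop (1:ℝ)] with x hx
    set y : ℝ := x ^ w with hy
    have hy1 : (1:ℝ) ≤ y := one_le_pow₀ hx
    have hy0 : (0:ℝ) < y := lt_of_lt_of_le one_pos hy1
    have hB1 : (1:ℤ) ≤ ⌈y⌉ := by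
      have h := Int.le_ceil y
      have h' : (1:ℝ) ≤ (⌈y⌉ : ℝ) := le_trans hy1 h
      exact_mod_cast h'
    obtain ⟨m, h1, h2, h3, h4⟩ := count_Ioo_bounds (c := c) hB1
    rw [← hiden y hy0]
    rw [div_le_div_iff_of_pos_right (by positivity : (0:ℝ) < 2*y)]
    have h1R : (p:ℝ) * m ≤ 2*(⌈y⌉:ℝ) - 1 := by exact_mod_cast h1
    have h2R : 2*(⌈y⌉:ℝ) - 1 < (p:ℝ) * (m+1) := by exact_mod_cast h2
    have h3R : (m:ℝ) ≤ (((Finset.Ioo (-(⌈y⌉ : ℤ)) ⌈y⌉).filter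
        fun n : ℤ => (n : ZMod p) = c).card : ℝ) := by exact_mod_cast h3
    have hyB : y ≤ (⌈y⌉ : ℝ) := Int.le_ceil y
    rw [sub_le_iff_le_add, div_le_iff₀ hpR]
    have hmul : (p:ℝ) * (m+1) ≤ ((((Finset.Ioo (-(⌈y⌉ : ℤ)) ⌈y⌉).filter
        fun n : ℤ => (n : ZMod p) = c).card : ℝ) + 1) * p := by
      rw [mul_comm]
      apply mul_le_mul_of_nonneg_right _ (le_of_lt hpR)
      linarith
    linarith
  · filter_upwards [Filter.eventually_ge_atTop (1:ℝ)] with x hx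
    set y : ℝ := x ^ w with hy
    have hy1 : (1:ℝ) ≤ y := one_le_pow₀ hx
    have hy0 : (0:ℝ) < y := lt_of_lt_of_le one_pos hy1
    have hB1 : (1:ℤ) ≤ ⌈y⌉ := by
      have h := Int.le_ceil y
      have h' : (1:ℝ) ≤ (⌈y⌉ : ℝ) := le_trans hy1 h
      exact_mod_cast h'
    obtain ⟨m, h1, h2, h3, h4⟩ := count_Ioo_bounds (c := c) hB1
    rw [← hiden2 y hy0]
    rw [div_le_div_iff_of_pos_right (by positivity : (0:ℝ) < 2*y)]
    have h1R : (p:ℝ) * m ≤ 2*(⌈y⌉:ℝ) - 1 := by exact_mod_cast h1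
    have h4R : (((Finset.Ioo (-(⌈y⌉ : ℤ)) ⌈y⌉).filter
        fun n : ℤ => (n : ZMod p) = c).card : ℝ) ≤ m + 1 := by exact_mod_cast h4
    have hyB : (⌈y⌉ : ℝ) < y + 1 := Int.ceil_lt_add_one y
    rw [← sub_le_iff_le_add, le_div_iff₀ hpR]
    have hmul2 : (((Finset.Ioo (-(⌈y⌉ : ℤ)) ⌈y⌉).filter
        fun n : ℤ => (n : ZMod p) = c).card - 1 : ℝ) * p ≤ (m:ℝ) * p :=
      mul_le_mul_of_nonneg_right (by linarith) (le_of_lt hpR)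
    have hcm : (m:ℝ) * p ≤ 2*(⌈y⌉:ℝ) - 1 := by rw [mul_comm]; exact h1R
    linarith


lemma wDisc_intCast (p : ℕ) (a : Fin 5 → ℤ) :
    ((wDisc a : ℤ) : ZMod p) = wDisc (fun i => ((a i : ℤ) : ZMod p)) := by
  simp only [wDisc]
  push_cast
  ring

lemma int_abs_lt_iff (n : ℤ) (y : ℝ) :
    |(n:ℝ)| < y ↔ -(⌈y⌉ : ℤ) < n ∧ n < ⌈y⌉ := by
  rw [abs_lt]
  constructor
  · rintro ⟨h1, h2⟩
    refine ⟨?_, Int.lt_ceil.mpr h2⟩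
    have : ((-n : ℤ) : ℝ) < y := by push_cast; linarith
    have := Int.lt_ceil.mpr this
    omega
  · rintro ⟨h1, h2⟩
    have hc := Int.ceil_lt_add_one y
    have hle : ((⌈y⌉:ℤ) : ℝ) ≤ y + 1 := le_of_lt hc
    constructor
    · have h1' : (-⌈y⌉ : ℤ) + 1 ≤ n := by omega
      have : ((-⌈y⌉ : ℤ) + 1 : ℝ) ≤ (n : ℝ) := by exact_mod_cast h1'
      push_cast at this
      linarith
    · have h2' : n + 1 ≤ (⌈y⌉ : ℤ) := by omega
      have : ((n:ℤ) + 1 : ℝ) ≤ ((⌈y⌉:ℤ) : ℝ) := by exact_mod_cast h2'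
      push_cast at this
      linarith

lemma boxCount_eq (p : ℕ) [NeZero p] (x : ℝ) :
    boxCount {a : Fin 5 → ℤ | (p : ℤ) ∣ wDisc a} x
      = ∑ r ∈ (Finset.univ.filter fun r : Fin 5 → ZMod p => wDisc r = 0),
          ∏ i, ((Finset.Ioo (-(⌈x ^ wt i⌉ : ℤ)) ⌈x ^ wt i⌉).filter
            fun n : ℤ => (n : ZMod p) = r i).card := by
  classical
  set G : Finset (Fin 5 → ℤ) :=
    (Fintype.piFinset fun i => Finset.Ioo (-(⌈x ^ wt i⌉ : ℤ)) ⌈x ^ wt i⌉).filter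
      (fun a => (p : ℤ) ∣ wDisc a) with hG
  have hmem : ∀ a : Fin 5 → ℤ,
      (a ∈ {a : Fin 5 → ℤ | (p : ℤ) ∣ wDisc a} ∧ ∀ i, |(a i : ℝ)| < x ^ wt i)
        ↔ a ∈ G := by
    intro a
    simp only [hG, Finset.mem_filter, Fintype.mem_piFinset, Finset.mem_Ioo,
      Set.mem_setOf_eq]
    constructor
    · rintro ⟨h1, h2⟩
      exact ⟨fun i => (int_abs_lt_iff _ _).mp (h2 i), h1⟩
    · rintro ⟨h1, h2⟩
      exact ⟨h2, fun i => (int_abs_lt_iff _ _).mpr (h1 i)⟩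
  have hbox : boxCount {a : Fin 5 → ℤ | (p : ℤ) ∣ wDisc a} x = G.card := by
    rw [boxCount, ← Nat.card_eq_finsetCard]
    exact Nat.card_congr (Equiv.subtypeEquivRight hmem)
  rw [hbox]
  rw [Finset.card_eq_sum_card_fiberwise
    (f := fun (a : Fin 5 → ℤ) => (fun i => ((a i : ℤ) : ZMod p)))
    (t := Finset.univ.filter fun r : Fin 5 → ZMod p => wDisc r = 0) ?_]
  · apply Finset.sum_congr rfl
    intro r hr
    simp only [Finset.mem_filter, Finset.mem_univ, true_and] at hr
    rw [← Fintype.card_piFinset]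
    congr 1
    ext a
    simp only [hG, Finset.mem_filter, Fintype.mem_piFinset, Finset.mem_Ioo,
      funext_iff]
    constructor
    · rintro ⟨⟨h1, _⟩, h3⟩
      exact fun i => ⟨h1 i, h3 i⟩
    · intro h
      refine ⟨⟨fun i => (h i).1, ?_⟩, fun i => (h i).2⟩
      rw [← ZMod.intCast_zmod_eq_zero_iff_dvd, wDisc_intCast]
      have : (fun i => ((a i : ℤ) : ZMod p)) = r := funext fun i => (h i).2
      rw [this, hr]
  · intro a ha
    simp only [hG, Finset.mem_coe, Finset.mem_filter] at ha
    simp only [Finset.mem_coe, Finset.mem_filter, Finset.mem_univ, true_and]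
    rw [← wDisc_intCast, ZMod.intCast_zmod_eq_zero_iff_dvd]
    exact ha.2

end LatticeCount


/-- For a prime `p`, the set of integral Weierstrass equations with discriminant
divisible by `p` has density exactly `1/p`: as `x → ∞`, the counting ratio
`#{a : p ∣ Δ(a), |aᵢ| < xⁱ} / (2⁵ x¹⁶)` tends to `p⁻¹`. -/

theorem density_bad_reduction (p : ℕ) (hp : p.Prime) :
    Filter.Tendsto
      (fun x : ℝ =>
        (boxCount {a : Fin 5 → ℤ | (p : ℤ) ∣ wDisc a} x : ℝ) / (2 ^ 5 * x ^ 16))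
      Filter.atTop (nhds ((p : ℝ)⁻¹)) := by
  haveI : Fact p.Prime := ⟨hp⟩
  haveI : NeZero p := ⟨hp.ne_zero⟩
  have hp0 : 0 < p := hp.pos
  have hpR : (0:ℝ) < p := by exact_mod_cast hp0
  set bad : Finset (Fin 5 → ZMod p) :=
    Finset.univ.filter (fun r : Fin 5 → ZMod p => wDisc r = 0) with hbad
  have hbadcard : bad.card = p ^ 4 := card_bad p hp
  have hwt : ∀ i : Fin 5, wt i ≠ 0 := by decide
  -- the limit function
  have htend : Filter.Tendsto
      (fun x : ℝ => ∑ r ∈ bad, ∏ i,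
        (((Finset.Ioo (-(⌈x ^ wt i⌉ : ℤ)) ⌈x ^ wt i⌉).filter
          fun n : ℤ => (n : ZMod p) = r i).card : ℝ) / (2 * x ^ wt i))
      Filter.atTop (nhds ((p : ℝ)⁻¹)) := by
    have h1 : Filter.Tendsto
        (fun x : ℝ => ∑ r ∈ bad, ∏ i,
          (((Finset.Ioo (-(⌈x ^ wt i⌉ : ℤ)) ⌈x ^ wt i⌉).filter
            fun n : ℤ => (n : ZMod p) = r i).card : ℝ) / (2 * x ^ wt i))
        Filter.atTop (nhds (∑ r ∈ bad, ∏ _i : Fin 5, (p : ℝ)⁻¹)) := by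
      apply tendsto_finset_sum
      intro r _
      apply tendsto_finset_prod
      intro i _
      exact tendsto_cnt (r i) (wt i) (hwt i)
    have h2 : (∑ r ∈ bad, ∏ _i : Fin 5, (p : ℝ)⁻¹) = (p : ℝ)⁻¹ := by
      rw [Finset.prod_const, Finset.sum_const, hbadcard, Finset.card_univ,
        Fintype.card_fin, nsmul_eq_mul]
      push_cast
      have hpne : (p:ℝ) ≠ 0 := ne_of_gt hpR
      field_simp
    rwa [h2] at h1
  apply htend.congr'
  filter_upwards [Filter.eventually_ge_atTop (1:ℝ)] with x hx
  have hx0 : (0:ℝ) < x := lt_of_lt_of_le one_pos hx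
  rw [boxCount_eq p x]
  push_cast
  rw [Finset.sum_div]
  apply Finset.sum_congr rfl
  intro r _
  rw [Finset.prod_div_distrib]
  congr 1
  have : ∏ i : Fin 5, (2 * x ^ wt i) = 2 ^ 5 * x ^ 16 := by
    rw [Fin.prod_univ_five]
    simp only [wt, Matrix.cons_val]
    norm_num
    ring
  rw [this]
end

section
/- Let p be an odd prime and let W be a Weierstrass curve over 𝔽_p in short form, i.e. with a₁ = a₂ = a₃ = 0 (so W : y² = x³ + cx + d for some c, d ∈ 𝔽_p). Then the orbit of W under the group of admissible changes of variables over 𝔽_p has cardinality at most p³(p−1)/2; that is, the number of Weierstrass equations over 𝔽_p defining a curve isomorphic to W is at most p³(p−1)/2. (This is the counting step in the proof of Proposition 3.13.) -/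
open WeierstrassCurve

/-- The group of variable changes is equivalent to `Rˣ × R × R × R`. -/
def vcEquiv (R : Type*) [CommRing R] :
    WeierstrassCurve.VariableChange R ≃ Rˣ × R × R × R where
  toFun C := (C.u, C.r, C.s, C.t)
  invFun x := ⟨x.1, x.2.1, x.2.2.1, x.2.2.2⟩
  left_inv C := rfl
  right_inv x := rfl

/-- For an odd prime `p` and a Weierstrass curve `W : y² = x³ + cx + d` over `𝔽_p` in
short form (`a₁ = a₂ = a₃ = 0`), the orbit of `W` under the group of admissible
changes of variables over `𝔽_p` has cardinality at most `p³(p-1)/2`. -/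
theorem card_orbit_le (p : ℕ) [Fact p.Prime] (hodd : Odd p)
    (W : WeierstrassCurve (ZMod p)) (h₁ : W.a₁ = 0) (h₂ : W.a₂ = 0) (h₃ : W.a₃ = 0) :
    Nat.card (MulAction.orbit (WeierstrassCurve.VariableChange (ZMod p)) W) ≤
      p ^ 3 * ((p - 1) / 2) := by
  have hp := (Fact.out : p.Prime)
  haveI : NeZero p := ⟨hp.ne_zero⟩
  haveI : Finite (WeierstrassCurve.VariableChange (ZMod p)) :=
    Finite.of_equiv _ (vcEquiv (ZMod p)).symm
  -- the stabilizer contains the nontrivial element (-1, 0, 0, 0)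
  set σ : WeierstrassCurve.VariableChange (ZMod p) := ⟨-1, 0, 0, 0⟩ with hσ
  have hσW : σ • W = W := by
    show σ • W = W
    ext <;> simp [WeierstrassCurve.variableChange_def, hσ, h₁, h₂, h₃] <;> norm_num
  have hσ1 : σ ≠ 1 := by
    intro h
    have : ((-1 : (ZMod p)ˣ) : ZMod p) = ((1 : (ZMod p)ˣ) : ZMod p) := by
      have := congrArg WeierstrassCurve.VariableChange.u h
      rw [hσ] at this
      exact_mod_cast congrArg (Units.val) this
    simp only [Units.val_neg, Units.val_one] at this
    have h2 : (2 : ZMod p) = 0 := by linear_combination -this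
    have hdvd : p ∣ 2 := (ZMod.natCast_eq_zero_iff 2 p).mp (by exact_mod_cast h2)
    have hp2 : p = 2 := (Nat.prime_dvd_prime_iff_eq hp Nat.prime_two).mp hdvd
    rw [hp2] at hodd
    exact absurd hodd (by decide)
  set S := MulAction.stabilizer (WeierstrassCurve.VariableChange (ZMod p)) W
  have hnt : Nontrivial S :=
    ⟨⟨⟨σ, hσW⟩, 1, fun h => hσ1 (by simpa using congrArg Subtype.val h)⟩⟩
  have hS2 : 2 ≤ Nat.card S := Finite.one_lt_card_iff_nontrivial.mpr hnt
  -- orbit-stabilizer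
  have horb : Nat.card (MulAction.orbit (WeierstrassCurve.VariableChange (ZMod p)) W)
      * Nat.card S = Nat.card (WeierstrassCurve.VariableChange (ZMod p)) := by
    rw [Nat.card_congr (MulAction.orbitEquivQuotientStabilizer _ W)]
    exact (Subgroup.card_eq_card_quotient_mul_card_subgroup S).symm
  have hG : Nat.card (WeierstrassCurve.VariableChange (ZMod p)) = (p - 1) * p ^ 3 := by
    have hu : Nat.card (ZMod p)ˣ = p - 1 := by
      rw [Nat.card_eq_fintype_card, ZMod.card_units_eq_totient, Nat.totient_prime hp]
    have hz : Nat.card (ZMod p) = p := by rw [Nat.card_eq_fintype_card, ZMod.card]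
    rw [Nat.card_congr (vcEquiv (ZMod p)), Nat.card_prod, Nat.card_prod, Nat.card_prod,
      hu, hz]
    ring
  have hdiv : (p - 1) / 2 * 2 = p - 1 := by
    have : Even (p - 1) := Nat.Odd.sub_odd hodd odd_one
    exact Nat.div_mul_cancel this.two_dvd
  have key : Nat.card (MulAction.orbit (WeierstrassCurve.VariableChange (ZMod p)) W) * 2
      ≤ p ^ 3 * ((p - 1) / 2) * 2 := by
    calc Nat.card (MulAction.orbit (WeierstrassCurve.VariableChange (ZMod p)) W) * 2
        ≤ Nat.card (MulAction.orbit (WeierstrassCurve.VariableChange (ZMod p)) W)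
          * Nat.card S := Nat.mul_le_mul_left _ hS2
      _ = (p - 1) * p ^ 3 := by rw [horb, hG]
      _ = p ^ 3 * ((p - 1) / 2) * 2 := by rw [mul_assoc, hdiv]; ring
  exact Nat.le_of_mul_le_mul_right key (by norm_num)
end
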